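/- Let N ≥ 2 be an integer. Then for every test function u, (∫₀^∞ (u''(r) + (N−1)·coth(r)·u'(r))²·(sinh r)^{N−1} dr) · (∫₀^∞ u'(r)²·( N²/(4r²) + (N(N−1)/(2r))·(coth r − 1/r) )^{−1}·(sinh r)^{N−1} dr) ≥ (∫₀^∞ u'(r)²·(sinh r)^{N−1} dr)². -/

import Mathlib

open Real MeasureTheory
open Set
-- Cauchy-Schwarz
lemma cs_integral {μ : Measure ℝ} {f g : ℝ → ℝ}
    (hf2 : Integrable (fun x => f x ^ 2) μ) (hg2 : Integrable (fun x => g x ^ 2) μ)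
    (hfg : Integrable (fun x => f x * g x) μ) :
    (∫ x, f x * g x ∂μ)^2 ≤ (∫ x, f x ^ 2 ∂μ) * (∫ x, g x ^ 2 ∂μ) := by
  set A := ∫ x, f x^2 ∂μ with hA
  set B := ∫ x, g x^2 ∂μ with hB
  set C := ∫ x, f x * g x ∂μ with hC
  have key : ∀ t : ℝ, 0 ≤ A - 2*t*C + t^2*B := by
    intro t
    have h0 : 0 ≤ ∫ x, (f x - t * g x)^2 ∂μ := integral_nonneg fun x => sq_nonneg _
    have he : ∫ x, (f x - t*g x)^2 ∂μ = A - 2*t*C + t^2*B := by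
      have h1 : (fun x => (f x - t*g x)^2)
          = fun x => (f x^2 - (2*t)*(f x*g x)) + t^2 * g x^2 := funext fun x => by ring
      have hG : Integrable (fun x => t^2 * g x ^2) μ := hg2.const_mul _
      have hFG : Integrable (fun x => 2*t*(f x * g x)) μ := hfg.const_mul _
      have hF : Integrable (fun x => f x^2 - 2*t*(f x*g x)) μ := hf2.sub hFG
      rw [h1]
      rw [integral_add hF hG, integral_sub hf2 hFG, integral_const_mul, integral_const_mul]
    linarith [he ▸ h0]
  have hBnn : 0 ≤ B := integral_nonneg fun x => sq_nonneg _
  have hAnn : 0 ≤ A := integral_nonneg fun x => sq_nonneg _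
  rcases hBnn.eq_or_lt with hB0 | hB0
  · have hC0 : C = 0 := by
      by_contra hC0
      have h1 := key ((A+1)/(2*C))
      rw [← hB0] at h1
      have h2 : 2*((A+1)/(2*C))*C = A+1 := by field_simp
      nlinarith
    rw [hC0, ← hB0]
    nlinarith
  · have h1 := key (C/B)
    have h2 : A - 2*(C/B)*C + (C/B)^2*B = A - C^2/B := by field_simp; ring
    have h3 : C^2/B ≤ A := by linarith [h2 ▸ h1]
    calc C^2 = (C^2/B)*B := by field_simp
    _ ≤ A*B := mul_le_mul_of_nonneg_right h3 hB0.le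

-- sinh x ≤ x cosh x for x ≥ 0
lemma sinh_le_mul_cosh {x : ℝ} (hx : 0 ≤ x) : Real.sinh x ≤ x * Real.cosh x := by
  have h : ∀ y : ℝ, HasDerivAt (fun t => t * Real.cosh t - Real.sinh t) (y * Real.sinh y) y := by
    intro y
    have := ((hasDerivAt_id y).mul (Real.hasDerivAt_cosh y)).sub (Real.hasDerivAt_sinh y)
    refine this.congr_deriv ?_; simp only [id]; ring
  have hm : MonotoneOn (fun t => t * Real.cosh t - Real.sinh t) (Ici 0) := by
    apply monotoneOn_of_deriv_nonneg (convex_Ici 0)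
      (Continuous.continuousOn (by continuity))
      (fun y hy => (h y).differentiableAt.differentiableWithinAt)
    intro y hy
    rw [(h y).deriv]
    have : 0 < y := by simpa using hy
    positivity
  have := hm (self_mem_Ici (a := (0:ℝ))) (by exact hx) hx
  simp at this
  linarith

lemma key_identity (N : ℕ) {r : ℝ} (hr : 0 < r) (x y : ℝ) :
    (y + ((N:ℝ)-1) * (Real.cosh r / Real.sinh r) * x)^2 * Real.sinh r ^ ((N:ℝ)-1)
    = (y + (-(N:ℝ)/(2*r) + ((N:ℝ)-1)*(Real.cosh r/Real.sinh r)) * x)^2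
        * Real.sinh r ^ ((N:ℝ)-1)
      + ((N:ℝ)^2/(4*r^2) + ((N:ℝ)*((N:ℝ)-1)/(2*r))*(Real.cosh r/Real.sinh r - 1/r))
          * x^2 * Real.sinh r ^ ((N:ℝ)-1)
      + ( (-((N:ℝ)/(2*r^2))) * Real.sinh r ^ ((N:ℝ)-1) * x^2
          + ((N:ℝ)/(2*r)) * (((N:ℝ)-1) * (Real.cosh r/Real.sinh r)
              * Real.sinh r ^ ((N:ℝ)-1)) * x^2
          + ((N:ℝ)/(2*r)) * Real.sinh r ^ ((N:ℝ)-1) * (2*x*y) ) := by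
  have hs : Real.sinh r ≠ 0 := ne_of_gt (Real.sinh_pos_iff.mpr hr)
  have hrne : r ≠ 0 := ne_of_gt hr
  set s := Real.sinh r ^ ((N:ℝ)-1)
  field_simp
  ring

lemma aux_main (N : ℕ) (hN : 2 ≤ N) (v : ℝ → ℝ) (hv : ContDiff ℝ (↑(⊤:ℕ∞)) v)
    (hcs : HasCompactSupport v) (hsupp : tsupport v ⊆ Set.Ioi 0) :
    (∫ r in Set.Ioi (0 : ℝ),
        (deriv v r + ((N : ℝ) - 1) * (Real.cosh r / Real.sinh r) * v r) ^ 2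
          * Real.sinh r ^ ((N : ℝ) - 1))
      * (∫ r in Set.Ioi (0 : ℝ),
          (v r) ^ 2 *
            ((N : ℝ) ^ 2 / (4 * r ^ 2)
              + ((N : ℝ) * ((N : ℝ) - 1) / (2 * r)) *
                  (Real.cosh r / Real.sinh r - 1 / r))⁻¹
            * Real.sinh r ^ ((N : ℝ) - 1))
    ≥ (∫ r in Set.Ioi (0 : ℝ), (v r) ^ 2 * Real.sinh r ^ ((N : ℝ) - 1)) ^ 2 := by
  have hNpos : (0:ℝ) < (N:ℝ) := by exact_mod_cast lt_of_lt_of_le two_pos hN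
  have hN1 : (1:ℝ) ≤ (N:ℝ) := by exact_mod_cast le_trans one_le_two hN
  have hvinf : ContDiff ℝ (↑(⊤:ℕ∞)) v := hv
  have hv' : Differentiable ℝ v := hv.differentiable (by simp)
  have hdvc : Continuous (deriv v) := ((contDiff_infty_iff_deriv.mp hvinf).2).continuous
  have hvc : Continuous v := hv.continuous
  have hvz : ∀ r, r ∉ tsupport v → v r = 0 := fun r hr => image_eq_zero_of_notMem_tsupport hr
  have hdvz : ∀ r, r ∉ tsupport v → deriv v r = 0 := by
    intro r hr
    by_contra h
    exact hr (support_deriv_subset h)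
  obtain ⟨a, b, ha, hab, hKs⟩ : ∃ a b : ℝ, 0 < a ∧ a < b ∧ tsupport v ⊆ Set.Ioo a b := by
    rcases (tsupport v).eq_empty_or_nonempty with h | h
    · exact ⟨1, 2, one_pos, one_lt_two, by rw [h]; exact empty_subset _⟩
    · have h1 := hcs.sInf_mem h
      have h2 := hcs.sSup_mem h
      have h0 : 0 < sInf (tsupport v) := hsupp h1
      have h3 : sInf (tsupport v) ≤ sSup (tsupport v) :=
        csInf_le_csSup h hcs.bddBelow hcs.bddAbove
      refine ⟨sInf (tsupport v) / 2, sSup (tsupport v) + 1, by linarith, by linarith, ?_⟩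
      intro x hx
      have hxl := csInf_le hcs.bddBelow hx
      have hxu := le_csSup hcs.bddAbove hx
      exact ⟨by linarith, by linarith⟩
  -- notation
  set W : ℝ → ℝ := fun r => (N : ℝ) ^ 2 / (4 * r ^ 2)
      + ((N : ℝ) * ((N : ℝ) - 1) / (2 * r)) * (Real.cosh r / Real.sinh r - 1 / r) with hW_def
  set w : ℝ → ℝ := fun r => Real.sinh r ^ ((N : ℝ) - 1) with hw_def
  have hIcc : ∀ r ∈ Icc a b, 0 < r := fun r hr => lt_of_lt_of_le ha hr.1
  have hIoc : ∀ r ∈ Ioc a b, r ∈ Icc a b := fun r hr => Ioc_subset_Icc_self hr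
  have hsinh : ∀ r ∈ Icc a b, 0 < Real.sinh r := fun r hr => Real.sinh_pos_iff.mpr (hIcc r hr)
  have hwpos : ∀ r ∈ Icc a b, 0 < w r := fun r hr => Real.rpow_pos_of_pos (hsinh r hr) _
  have hWpos : ∀ r ∈ Icc a b, 0 < W r := by
    intro r hr
    have hr0 := hIcc r hr
    have hs0 := hsinh r hr
    have h1 : 0 < (N:ℝ)^2/(4*r^2) := by positivity
    have h2 : 0 ≤ Real.cosh r / Real.sinh r - 1/r := by
      rw [sub_nonneg, div_le_div_iff₀ hr0 hs0]
      have := sinh_le_mul_cosh hr0.le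
      linarith
    have h3 : 0 ≤ (N:ℝ)*((N:ℝ)-1)/(2*r) := by
      apply div_nonneg (mul_nonneg hNpos.le (by linarith)) (by linarith)
    have := mul_nonneg h3 h2
    simp only [hW_def]
    linarith
  -- conversion Ioi 0 → Ioc a b
  have hconv : ∀ I : ℝ → ℝ, (∀ r, r ∉ tsupport v → I r = 0) →
      ∫ r in Ioi (0:ℝ), I r = ∫ r in Ioc a b, I r := by
    intro I hI
    have e1 := setIntegral_eq_integral_of_forall_compl_eq_zero
      (μ := volume) (s := Ioi (0:ℝ)) (f := I)
      (fun r hr => hI r (fun hmem => hr (hsupp hmem)))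
    have e2 := setIntegral_eq_integral_of_forall_compl_eq_zero
      (μ := volume) (s := Ioc a b) (f := I)
      (fun r hr => hI r (fun hmem => hr (Ioo_subset_Ioc_self (hKs hmem))))
    rw [e1, e2]
  -- continuity
  have hcont_w : ContinuousOn w (Icc a b) :=
    Real.continuous_sinh.continuousOn.rpow_const (fun r hr => Or.inl (ne_of_gt (hsinh r hr)))
  have hcont_coth : ContinuousOn (fun r => Real.cosh r / Real.sinh r) (Icc a b) :=
    Real.continuous_cosh.continuousOn.div Real.continuous_sinh.continuousOn
      (fun r hr => ne_of_gt (hsinh r hr))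
  have hcont_W : ContinuousOn W (Icc a b) := by
    apply ContinuousOn.add
    · exact continuousOn_const.div (by fun_prop) (fun r hr => by
        have := hIcc r hr; positivity)
    · exact (continuousOn_const.div (by fun_prop)
        (fun r hr => by have := hIcc r hr; positivity)).mul
        (hcont_coth.sub (continuousOn_const.div continuousOn_id
          (fun r hr => ne_of_gt (hIcc r hr))))
  have hint : ∀ {I : ℝ → ℝ}, ContinuousOn I (Icc a b) → IntegrableOn I (Ioc a b) volume :=
    fun {I} hI => (hI.integrableOn_compact isCompact_Icc).mono_set Ioc_subset_Icc_self
  -- IBP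
  set Fd : ℝ → ℝ := fun r =>
    (-((N:ℝ)/(2*r^2))) * Real.sinh r ^ ((N:ℝ)-1) * v r^2
    + ((N:ℝ)/(2*r)) * (((N:ℝ)-1) * (Real.cosh r/Real.sinh r)
        * Real.sinh r ^ ((N:ℝ)-1)) * v r^2
    + ((N:ℝ)/(2*r)) * Real.sinh r ^ ((N:ℝ)-1) * (2 * v r * deriv v r) with hFd_def
  have hFder : ∀ r ∈ Icc a b,
      HasDerivAt (fun t => ((N:ℝ)/(2*t)) * Real.sinh t ^ ((N:ℝ)-1) * (v t)^2) (Fd r) r := by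
    intro r hr
    have hr0 := hIcc r hr
    have hs0 := hsinh r hr
    have h1 : HasDerivAt (fun t : ℝ => (N:ℝ)/(2*t)) (-((N:ℝ)/(2*r^2))) r := by
      have heq : (fun t : ℝ => (N:ℝ)/(2*t)) = fun t : ℝ => ((N:ℝ)/2) * t⁻¹ := by
        funext t
        rw [div_eq_mul_inv, div_eq_mul_inv, mul_inv, ← mul_assoc]
      rw [heq]
      have := (hasDerivAt_inv (ne_of_gt hr0)).const_mul ((N:ℝ)/2)
      refine this.congr_deriv ?_
      ring
    have h2 : HasDerivAt (fun t => Real.sinh t ^ ((N:ℝ)-1))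
        (((N:ℝ)-1) * (Real.cosh r/Real.sinh r) * Real.sinh r ^ ((N:ℝ)-1)) r := by
      have h := (Real.hasDerivAt_sinh r).rpow_const (p := (N:ℝ)-1) (Or.inl (ne_of_gt hs0))
      convert h using 1
      have e : Real.sinh r ^ ((N:ℝ)-1-1) = Real.sinh r ^ ((N:ℝ)-1) * (Real.sinh r)⁻¹ := by
        rw [Real.rpow_sub hs0, Real.rpow_one, div_eq_mul_inv]
      rw [e]
      ring
    have h3 : HasDerivAt (fun t => (v t)^2) (2 * v r * deriv v r) r := by
      have := ((hv' r).hasDerivAt).fun_pow 2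
      simpa using this
    have := (h1.mul h2).mul h3
    refine this.congr_deriv ?_
    simp only [hFd_def, Pi.mul_apply]
    ring
  have hcont_Fd : ContinuousOn Fd (Icc a b) := by
    have c1 : ContinuousOn (fun r : ℝ => -((N:ℝ)/(2*r^2))) (Icc a b) := by
      apply ContinuousOn.neg
      exact continuousOn_const.div (by fun_prop) (fun r hr => by have := hIcc r hr; positivity)
    have c2 : ContinuousOn (fun r : ℝ => (N:ℝ)/(2*r)) (Icc a b) :=
      continuousOn_const.div (by fun_prop) (fun r hr => by have := hIcc r hr; positivity)
    exact (((c1.mul hcont_w).mul (hvc.continuousOn.pow 2)).add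
      ((c2.mul ((continuousOn_const.mul hcont_coth).mul hcont_w)).mul
        (hvc.continuousOn.pow 2))).add
      ((c2.mul hcont_w).mul ((continuousOn_const.mul hvc.continuousOn).mul
        hdvc.continuousOn))
  have hIBP : ∫ r in Ioc a b, Fd r = 0 := by
    have hva : v a = 0 := hvz a (fun h => lt_irrefl a (hKs h).1)
    have hvb : v b = 0 := hvz b (fun h => lt_irrefl b (hKs h).2)
    have h0 : ∫ r in a..b, Fd r =
        (fun t => ((N:ℝ)/(2*t)) * Real.sinh t ^ ((N:ℝ)-1) * (v t)^2) b
          - (fun t => ((N:ℝ)/(2*t)) * Real.sinh t ^ ((N:ℝ)-1) * (v t)^2) a := by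
      apply intervalIntegral.integral_eq_sub_of_hasDerivAt
      · intro x hx
        exact hFder x (by rwa [uIcc_of_le hab.le] at hx)
      · apply ContinuousOn.intervalIntegrable
        rw [uIcc_of_le hab.le]
        exact hcont_Fd
    rw [intervalIntegral.integral_of_le hab.le] at h0
    rw [h0]
    simp [hva, hvb]
  have hintS : IntegrableOn (fun r => (deriv v r
      + (-(N:ℝ)/(2*r) + ((N:ℝ)-1)*(Real.cosh r/Real.sinh r)) * v r)^2 * w r)
      (Ioc a b) volume := by
    apply hint
    apply ContinuousOn.mul _ hcont_w
    apply ContinuousOn.pow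
    apply ContinuousOn.add hdvc.continuousOn
    apply ContinuousOn.mul _ hvc.continuousOn
    apply ContinuousOn.add
    · exact continuousOn_const.div (by fun_prop)
        (fun r hr => by have := hIcc r hr; positivity)
    · exact continuousOn_const.mul hcont_coth
  have hintA' : IntegrableOn (fun r => W r * v r^2 * w r) (Ioc a b) volume :=
    hint ((hcont_W.mul (hvc.continuousOn.pow 2)).mul hcont_w)
  have hintFd : IntegrableOn Fd (Ioc a b) volume := hint hcont_Fd
  have hsplit : ∫ r in Ioc a b,
        (deriv v r + ((N:ℝ)-1) * (Real.cosh r / Real.sinh r) * v r)^2 * w r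
      = (∫ r in Ioc a b, (deriv v r
          + (-(N:ℝ)/(2*r) + ((N:ℝ)-1)*(Real.cosh r/Real.sinh r)) * v r)^2 * w r)
        + (∫ r in Ioc a b, W r * v r^2 * w r) := by
    have h12 : IntegrableOn (fun r => (deriv v r
        + (-(N:ℝ)/(2*r) + ((N:ℝ)-1)*(Real.cosh r/Real.sinh r)) * v r)^2 * w r
        + W r * v r^2 * w r) (Ioc a b) volume := hintS.add hintA'
    have e : ∫ r in Ioc a b,
          (deriv v r + ((N:ℝ)-1)*(Real.cosh r/Real.sinh r) * v r)^2 * w r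
        = ∫ r in Ioc a b, ((deriv v r
            + (-(N:ℝ)/(2*r) + ((N:ℝ)-1)*(Real.cosh r/Real.sinh r)) * v r)^2 * w r
            + W r * v r^2 * w r + Fd r) := by
      apply setIntegral_congr_fun measurableSet_Ioc
      intro r hr
      simp only [hW_def, hw_def, hFd_def]
      exact key_identity N (hIcc r (hIoc r hr)) (v r) (deriv v r)
    rw [e, integral_add h12 hintFd, integral_add hintS hintA', hIBP, add_zero]
  have hSnn : 0 ≤ ∫ r in Ioc a b, (deriv v r
      + (-(N:ℝ)/(2*r) + ((N:ℝ)-1)*(Real.cosh r/Real.sinh r)) * v r)^2 * w r :=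
    setIntegral_nonneg measurableSet_Ioc
      (fun r hr => mul_nonneg (sq_nonneg _) (hwpos r (hIoc r hr)).le)
  have hBnn : 0 ≤ ∫ r in Ioc a b, (v r)^2 * (W r)⁻¹ * w r :=
    setIntegral_nonneg measurableSet_Ioc
      (fun r hr => mul_nonneg (mul_nonneg (sq_nonneg _)
        (inv_nonneg.mpr (hWpos r (hIoc r hr)).le)) (hwpos r (hIoc r hr)).le)
  have hcsq : (∫ r in Ioc a b, (v r)^2 * w r)^2
      ≤ (∫ r in Ioc a b, W r * v r^2 * w r)
        * (∫ r in Ioc a b, (v r)^2 * (W r)⁻¹ * w r) := by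
    set f₁ : ℝ → ℝ := fun r => Real.sqrt (W r * w r) * v r with hf1
    set g₁ : ℝ → ℝ := fun r => Real.sqrt (w r / W r) * v r with hg1
    have hcf : ContinuousOn f₁ (Icc a b) :=
      ((hcont_W.mul hcont_w).sqrt).mul hvc.continuousOn
    have hcg : ContinuousOn g₁ (Icc a b) :=
      ((hcont_w.div hcont_W (fun r hr => ne_of_gt (hWpos r hr))).sqrt).mul hvc.continuousOn
    have h2f : IntegrableOn (fun x => f₁ x^2) (Ioc a b) volume := hint (hcf.pow 2)
    have h2g : IntegrableOn (fun x => g₁ x^2) (Ioc a b) volume := hint (hcg.pow 2)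
    have hfg : IntegrableOn (fun x => f₁ x * g₁ x) (Ioc a b) volume := hint (hcf.mul hcg)
    have hCS := cs_integral (μ := volume.restrict (Ioc a b)) h2f h2g hfg
    have e1 : ∫ x in Ioc a b, f₁ x * g₁ x = ∫ r in Ioc a b, (v r)^2 * w r := by
      apply setIntegral_congr_fun measurableSet_Ioc
      intro r hr
      have h1 := hWpos r (hIoc r hr)
      have h2 := hwpos r (hIoc r hr)
      simp only [hf1, hg1]
      have hs : Real.sqrt (W r * w r) * Real.sqrt (w r / W r) = w r := by
        rw [← Real.sqrt_mul (by positivity),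
          show W r * w r * (w r / W r) = (w r)^2 by field_simp,
          Real.sqrt_sq h2.le]
      calc Real.sqrt (W r * w r) * v r * (Real.sqrt (w r / W r) * v r)
          = (Real.sqrt (W r * w r) * Real.sqrt (w r / W r)) * (v r)^2 := by ring
        _ = w r * (v r)^2 := by rw [hs]
        _ = (v r)^2 * w r := by ring
    have e2 : ∫ x in Ioc a b, f₁ x^2 = ∫ r in Ioc a b, W r * v r^2 * w r := by
      apply setIntegral_congr_fun measurableSet_Ioc
      intro r hr
      have h1 := hWpos r (hIoc r hr)
      have h2 := hwpos r (hIoc r hr)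
      simp only [hf1]
      rw [mul_pow, Real.sq_sqrt (by positivity)]
      ring
    have e3 : ∫ x in Ioc a b, g₁ x^2 = ∫ r in Ioc a b, (v r)^2 * (W r)⁻¹ * w r := by
      apply setIntegral_congr_fun measurableSet_Ioc
      intro r hr
      have h1 := hWpos r (hIoc r hr)
      have h2 := hwpos r (hIoc r hr)
      simp only [hg1]
      rw [mul_pow, Real.sq_sqrt (div_nonneg h2.le h1.le), div_eq_mul_inv]
      ring
    rw [e1, e2, e3] at hCS
    exact hCS
  have z1 : ∀ r, r ∉ tsupport v →
      (deriv v r + ((N:ℝ)-1) * (Real.cosh r / Real.sinh r) * v r)^2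
        * Real.sinh r ^ ((N:ℝ)-1) = 0 := by
    intro r hr; rw [hvz r hr, hdvz r hr]; ring
  have z2 : ∀ r, r ∉ tsupport v →
      (v r)^2 * ((N:ℝ)^2/(4*r^2)
        + ((N:ℝ)*((N:ℝ)-1)/(2*r)) * (Real.cosh r/Real.sinh r - 1/r))⁻¹
        * Real.sinh r ^ ((N:ℝ)-1) = 0 := by
    intro r hr; rw [hvz r hr]; ring
  have z3 : ∀ r, r ∉ tsupport v → (v r)^2 * Real.sinh r ^ ((N:ℝ)-1) = 0 := by
    intro r hr; rw [hvz r hr]; ring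
  rw [hconv _ z1, hconv _ z2, hconv _ z3]
  simp only [hW_def, hw_def] at hsplit hcsq hSnn hBnn
  rw [ge_iff_le, hsplit]
  nlinarith [hcsq, hSnn, hBnn, mul_nonneg hSnn hBnn]

/-- **Sharpened Heisenberg-Pauli-Weyl uncertainty principle, radial form**
(inequality (2.12) of Berchio-Ganguly-Roychowdhury). -/
theorem stmt_11 (N : ℕ) (hN : 2 ≤ N)
    (u : ℝ → ℝ) (hu : ContDiff ℝ (⊤ : ℕ∞) u) (hcs : HasCompactSupport u)
    (hsupp : tsupport u ⊆ Set.Ioi 0) :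
    (∫ r in Set.Ioi (0 : ℝ),
        (deriv (deriv u) r + ((N : ℝ) - 1) * (Real.cosh r / Real.sinh r) * deriv u r) ^ 2
          * Real.sinh r ^ ((N : ℝ) - 1))
      * (∫ r in Set.Ioi (0 : ℝ),
          (deriv u r) ^ 2 *
            ((N : ℝ) ^ 2 / (4 * r ^ 2)
              + ((N : ℝ) * ((N : ℝ) - 1) / (2 * r)) *
                  (Real.cosh r / Real.sinh r - 1 / r))⁻¹
            * Real.sinh r ^ ((N : ℝ) - 1))
    ≥ (∫ r in Set.Ioi (0 : ℝ), (deriv u r) ^ 2 * Real.sinh r ^ ((N : ℝ) - 1)) ^ 2 := by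
  have h1 : ContDiff ℝ (↑(⊤:ℕ∞)) (deriv u) :=
    (contDiff_infty_iff_deriv.mp (hu.of_le (by simp))).2
  have h2 : HasCompactSupport (deriv u) := hcs.deriv
  have h3 : tsupport (deriv u) ⊆ Set.Ioi 0 :=
    subset_trans (closure_minimal support_deriv_subset (isClosed_tsupport u)) hsupp
  exact aux_main N hN (deriv u) h1 h2 h3
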